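/- arXiv:1906.09464 — 2 statements merged into one kernel-verified Lean document; each statement's English description precedes it below -/
import Mathlib

section
/- There exist α ∈ (0, 1) and β > 0 such that for every θ ∈ Θ and every pair of probability measures μ₁, μ₂ on X with ∫ V dμ₁ < ∞ and ∫ V dμ₂ < ∞ one has σ_β(P_θ μ₁, P_θ μ₂) ≤ α σ_β(μ₁, μ₂). -/
open MeasureTheory ProbabilityTheory ENNReal

noncomputable section

namespace PoissonPaper

variable {X : Type*} [MeasurableSpace X]

/-- The weighted sup-norm `‖φ‖_β = sup_x |φ(x)| / (1 + β V(x))`, valued in `ℝ≥0∞`. -/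
def wnorm (β : ℝ) (V : X → ℝ) (φ : X → ℝ) : ℝ≥0∞ :=
  ⨆ x, ENNReal.ofReal (|φ x| / (1 + β * V x))

open Classical in
/-- The metric `d_β(x,y) = 2 + βV(x) + βV(y)` for `x ≠ y`, `0` on the diagonal. -/
def dBeta (β : ℝ) (V : X → ℝ) (x y : X) : ℝ :=
  if x = y then 0 else 2 + β * V x + β * V y

/-- The oscillation seminorm `|||φ|||_β = sup_{x ≠ y} |φ(x) - φ(y)| / d_β(x,y)`,
valued in `ℝ≥0∞`.  (For `x = y` the quotient is `0/0 = 0`, so the diagonal does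
not contribute.) -/
def osc (β : ℝ) (V : X → ℝ) (φ : X → ℝ) : ℝ≥0∞ :=
  ⨆ x, ⨆ y, ENNReal.ofReal (|φ x - φ y| / dBeta β V x y)

/-- Action of a kernel on functions: `(P*φ)(x) = ∫ φ(y) P(x,dy)`. -/
def act (P : Kernel X X) (φ : X → ℝ) : X → ℝ := fun x => ∫ y, φ y ∂(P x)

/-- Drift inequality `(P*V)(x) ≤ γ V(x) + K`, with the integral taken in the
lower-integral sense (recall `V ≥ 0`). -/
def Drift (P : Kernel X X) (V : X → ℝ) (γ K : ℝ) : Prop :=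
  ∀ x, ∫⁻ y, ENNReal.ofReal (V y) ∂(P x) ≤ ENNReal.ofReal (γ * V x + K)

instance bindIsFinite (μ : Measure X) [IsFiniteMeasure μ] (P : Kernel X X) [IsMarkovKernel P] :
    IsFiniteMeasure (μ.bind P) := by
  constructor
  rw [Measure.bind_apply MeasurableSet.univ (Kernel.measurable P).aemeasurable]
  calc ∫⁻ x, (P x) Set.univ ∂μ = ∫⁻ _, 1 ∂μ := by simp
    _ = μ Set.univ := by simp
    _ < ⊤ := measure_lt_top μ _

/-- The total variation measure `|μ₁ - μ₂|` of the difference of two finite measures. -/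
def tv (μ₁ μ₂ : Measure X) [IsFiniteMeasure μ₁] [IsFiniteMeasure μ₂] : Measure X :=
  (μ₁.toSignedMeasure - μ₂.toSignedMeasure).totalVariation

/-- `σ_β(μ₁, μ₂) = ∫ (1 + βV) d|μ₁ - μ₂|`. -/
def sigmaB (β : ℝ) (V : X → ℝ) (μ₁ μ₂ : Measure X) [IsFiniteMeasure μ₁] [IsFiniteMeasure μ₂] :
    ℝ :=
  ∫ x, (1 + β * V x) ∂(tv μ₁ μ₂)

/-- `σ_β(η) = ∫ (1 + βV) d|η|` for a finite signed measure `η`. -/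
def sigmaS (β : ℝ) (V : X → ℝ) (η : SignedMeasure X) : ℝ :=
  ∫ x, (1 + β * V x) ∂(η.totalVariation)

/-- `n`-fold iterate (power) of a kernel. -/
def kpow (P : Kernel X X) : ℕ → Kernel X X
  | 0 => Kernel.id
  | n + 1 => P ∘ₖ kpow P n

instance kpowIsMarkov (P : Kernel X X) [IsMarkovKernel P] : ∀ n, IsMarkovKernel (kpow P n)
  | 0 => by rw [kpow]; infer_instance
  | n + 1 => by have := kpowIsMarkov P n; rw [kpow]; infer_instance

/-- Action of a (Markov) kernel on finite signed measures, via the Jordan decomposition. -/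
def sbind (P : Kernel X X) [IsMarkovKernel P] (η : SignedMeasure X) : SignedMeasure X :=
  (η.toJordanDecomposition.posPart.bind P).toSignedMeasure -
    (η.toJordanDecomposition.negPart.bind P).toSignedMeasure

/-! As signed measures `μ₁ - μ₂ = p - q`, where `p = μ₁ - μ₂` and `q = μ₂ - μ₁` are the
truncated measure differences; so `σ_β(μ₁, μ₂) = ∫ f dp + ∫ f dq` for `f = 1 + βV`, and
`p(X) = q(X)`. By duality,
`σ_β(Pμ₁, Pμ₂) = ∫ Pφ dμ₁ - ∫ Pφ dμ₂ = ∫ Pφ dp - ∫ Pφ dq` for some `φ` with `|φ| ≤ f`, and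
averaging `Pφ(x) - Pφ(y)` over `p ⊗ q` reduces the claim to the pointwise bound
`Pφ(x) - Pφ(y) ≤ α (f(x) + f(y))`. If `V(x) + V(y) ≥ R`, the drift condition gives it because
`γ < 1` and `R > 2K/(1 - γ)`. If `x` and `y` both lie in `C`, removing the common part `ᾱμ̄` of
`P(x, ·)` and `P(y, ·)` saves `2ᾱ`, which pays for the drift constant `2βK` once `β = ᾱ/(2K)`. -/

lemma integrable_of_abs_le {μ : Measure X} {φ f : X → ℝ} (hf : Integrable f μ)
    (hφ : Measurable φ) (hφf : ∀ z, |φ z| ≤ f z) : Integrable φ μ :=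
  hf.mono' hφ.aestronglyMeasurable (ae_of_all _ hφf)

lemma integrable_one_add_mul {μ : Measure X} [IsFiniteMeasure μ] {V : X → ℝ}
    (hV : Integrable V μ) (β : ℝ) : Integrable (fun z => 1 + β * V z) μ :=
  (integrable_const 1).add (hV.const_mul β)

lemma Measure.add_sub_eq_add_sub (μ ν : Measure X) [IsFiniteMeasure μ] [IsFiniteMeasure ν] :
    μ + (ν - μ) = ν + (μ - ν) := by
  rw [← Measure.toSignedMeasure_eq_toSignedMeasure_iff, Measure.toSignedMeasure_add,
    Measure.toSignedMeasure_add, sub_eq_sub_iff_add_eq_add.mp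
      (Measure.sub_toSignedMeasure_eq_toSignedMeasure_sub (μ := μ) (ν := ν)), add_comm]

lemma tv_eq_sub_add_sub (μ ν : Measure X) [IsFiniteMeasure μ] [IsFiniteMeasure ν] :
    tv μ ν = (μ - ν) + (ν - μ) := by
  rw [tv, SignedMeasure.totalVariation, Measure.toJordanDecomposition_toSignedMeasure_sub]
  rfl

lemma integral_sub_integral_eq_of_add_eq {μ₁ μ₂ ν₁ ν₂ : Measure X} (h : μ₁ + ν₂ = μ₂ + ν₁)
    {g : X → ℝ} (hμ₁ : Integrable g μ₁) (hμ₂ : Integrable g μ₂) (hν₁ : Integrable g ν₁)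
    (hν₂ : Integrable g ν₂) :
    ∫ x, g x ∂μ₁ - ∫ x, g x ∂μ₂ = ∫ x, g x ∂ν₁ - ∫ x, g x ∂ν₂ := by
  have h' := congrArg (fun μ => ∫ x, g x ∂μ) h
  simp only [integral_add_measure hμ₁ hν₂, integral_add_measure hμ₂ hν₁] at h'
  linarith

lemma exists_integral_tv_eq_integral_sub (μ ν : Measure X) [IsFiniteMeasure μ]
    [IsFiniteMeasure ν] {f : X → ℝ} (hf : Measurable f) (hf0 : ∀ z, 0 ≤ f z)
    (hfμ : Integrable f μ) (hfν : Integrable f ν) :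
    ∃ φ : X → ℝ, Measurable φ ∧ (∀ z, |φ z| ≤ f z) ∧
      ∫ z, f z ∂(tv μ ν) = ∫ z, φ z ∂μ - ∫ z, φ z ∂ν := by
  classical
  obtain ⟨s, hs⟩ := exists_isHahnDecomposition μ ν
  let φ : X → ℝ := fun z => if z ∈ s then -f z else f z
  have hφ : Measurable φ := hf.neg.ite hs.measurableSet hf
  have hφf : ∀ z, |φ z| ≤ f z := fun z => by
    by_cases hz : z ∈ s <;> simp [φ, hz, abs_of_nonneg (hf0 z)]
  -- `μ - ν` lives on `sᶜ`, where `φ = f`, and `ν - μ` lives on `s`, where `φ = -f`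
  have hpos : φ =ᵐ[μ - ν] f := by
    filter_upwards [measure_eq_zero_iff_ae_notMem.mp
      (Measure.sub_apply_eq_zero_of_isHahnDecomposition hs)] with z hz
    simp [φ, hz]
  have hneg : φ =ᵐ[ν - μ] -f := by
    filter_upwards [measure_eq_zero_iff_ae_notMem.mp
      (Measure.sub_apply_eq_zero_of_isHahnDecomposition hs.compl)] with z hz
    simp [φ, Set.notMem_compl_iff.mp hz]
  refine ⟨φ, hφ, hφf, ?_⟩
  have hφμ := integrable_of_abs_le hfμ hφ hφf
  have hφν := integrable_of_abs_le hfν hφ hφf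
  have hdiff := integral_sub_integral_eq_of_add_eq (Measure.add_sub_eq_add_sub μ ν) hφμ hφν
    (hφμ.mono_measure Measure.sub_le) (hφν.mono_measure Measure.sub_le)
  have h₁ : ∫ z, φ z ∂(μ - ν) = ∫ z, f z ∂(μ - ν) := integral_congr_ae hpos
  have h₂ : ∫ z, φ z ∂(ν - μ) = -∫ z, f z ∂(ν - μ) :=
    (integral_congr_ae hneg).trans (integral_neg f)
  rw [tv_eq_sub_add_sub, integral_add_measure (hfμ.mono_measure Measure.sub_le)
      (hfν.mono_measure Measure.sub_le), hdiff, h₁, h₂, sub_neg_eq_add]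

lemma integral_sub_integral_le_of_sub_le {p q : Measure X} [IsFiniteMeasure p]
    [IsFiniteMeasure q] (hpq : p Set.univ = q Set.univ) {g h : X → ℝ}
    (hgp : Integrable g p) (hgq : Integrable g q) (hhp : Integrable h p) (hhq : Integrable h q)
    (hgh : ∀ x y, g x - g y ≤ h x + h y) :
    ∫ x, g x ∂p - ∫ x, g x ∂q ≤ ∫ x, h x ∂p + ∫ x, h x ∂q := by
  set m := p.real Set.univ
  have hqm : q.real Set.univ = m := by simp only [m, measureReal_def, hpq]
  rcases (measureReal_nonneg : 0 ≤ m).eq_or_lt with hm | hm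
  · have hp : p = 0 := Measure.measure_univ_eq_zero.mp ((measureReal_eq_zero_iff).mp hm.symm)
    have hq : q = 0 :=
      Measure.measure_univ_eq_zero.mp ((measureReal_eq_zero_iff).mp (hqm.trans hm.symm))
    simp [hp, hq]
  -- integrate `g x - g y ≤ h x + h y` in `x` against `p`, then in `y` against `q`
  have hy : ∀ y, ∫ x, g x ∂p - m * g y ≤ ∫ x, h x ∂p + m * h y := fun y => by
    have := integral_mono (hgp.sub (integrable_const (g y))) (hhp.add (integrable_const (h y)))
      fun x => hgh x y
    simpa [integral_sub hgp (integrable_const _), integral_add hhp (integrable_const _),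
      mul_comm] using this
  have : ∫ y, (∫ x, g x ∂p - m * g y) ∂q ≤ ∫ y, (∫ x, h x ∂p + m * h y) ∂q :=
    integral_mono ((integrable_const _).sub (hgq.const_mul m))
      ((integrable_const _).add (hhq.const_mul m)) hy
  rw [integral_sub (integrable_const _) (hgq.const_mul m),
    integral_add (integrable_const _) (hhq.const_mul m), integral_const, integral_const,
    integral_const_mul, integral_const_mul, smul_eq_mul, smul_eq_mul, hqm] at this
  exact le_of_mul_le_mul_left (by linarith) hm

lemma integral_sub_integral_le_integral_tv {μ₁ μ₂ : Measure X} [IsFiniteMeasure μ₁]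
    [IsFiniteMeasure μ₂] (hμ : μ₁ Set.univ = μ₂ Set.univ) {g h : X → ℝ}
    (hg₁ : Integrable g μ₁) (hg₂ : Integrable g μ₂) (hh₁ : Integrable h μ₁)
    (hh₂ : Integrable h μ₂) (hgh : ∀ x y, g x - g y ≤ h x + h y) :
    ∫ x, g x ∂μ₁ - ∫ x, g x ∂μ₂ ≤ ∫ x, h x ∂(tv μ₁ μ₂) := by
  have hmass : (μ₁ - μ₂) Set.univ = (μ₂ - μ₁) Set.univ := by
    have h := congrArg (· Set.univ) (Measure.add_sub_eq_add_sub μ₁ μ₂)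
    simp only [Measure.add_apply, hμ] at h
    exact ((ENNReal.add_right_inj (measure_ne_top _ _)).1 h).symm
  rw [integral_sub_integral_eq_of_add_eq (Measure.add_sub_eq_add_sub μ₁ μ₂) hg₁ hg₂
      (hg₁.mono_measure Measure.sub_le) (hg₂.mono_measure Measure.sub_le), tv_eq_sub_add_sub,
    integral_add_measure (hh₁.mono_measure Measure.sub_le) (hh₂.mono_measure Measure.sub_le)]
  exact integral_sub_integral_le_of_sub_le hmass (hg₁.mono_measure Measure.sub_le)
    (hg₂.mono_measure Measure.sub_le) (hh₁.mono_measure Measure.sub_le)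
    (hh₂.mono_measure Measure.sub_le) hgh

lemma integral_eq_integral_sub_add_integral {ν ρ : Measure X} [IsFiniteMeasure ρ] (h : ρ ≤ ν)
    {g : X → ℝ} (hg : Integrable g ν) :
    ∫ x, g x ∂ν = ∫ x, g x ∂(ν - ρ) + ∫ x, g x ∂ρ := by
  conv_lhs => rw [← Measure.sub_add_cancel_of_le h]
  exact integral_add_measure (hg.mono_measure Measure.sub_le) (hg.mono_measure h)

lemma integral_sub_integral_le_of_abs_le {ν₁ ν₂ ρ : Measure X} [IsFiniteMeasure ν₁]
    (h₁ : ρ ≤ ν₁) (h₂ : ρ ≤ ν₂) {φ f : X → ℝ} (hφ : Measurable φ) (hφf : ∀ z, |φ z| ≤ f z)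
    (hf₁ : Integrable f ν₁) (hf₂ : Integrable f ν₂) :
    ∫ z, φ z ∂ν₁ - ∫ z, φ z ∂ν₂ ≤ ∫ z, f z ∂ν₁ + ∫ z, f z ∂ν₂ - 2 * ∫ z, f z ∂ρ := by
  have : IsFiniteMeasure ρ := isFiniteMeasure_of_le ν₁ h₁
  have hbound : ∀ ν : Measure X, Integrable f ν → |∫ z, φ z ∂ν| ≤ ∫ z, f z ∂ν := fun ν hf =>
    norm_integral_le_of_norm_le (f := φ) hf (ae_of_all _ hφf)
  have e₁ := abs_le.mp (hbound _ (hf₁.mono_measure (Measure.sub_le (ν := ρ))))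
  have e₂ := abs_le.mp (hbound _ (hf₂.mono_measure (Measure.sub_le (ν := ρ))))
  rw [integral_eq_integral_sub_add_integral h₁ (integrable_of_abs_le hf₁ hφ hφf),
    integral_eq_integral_sub_add_integral h₂ (integrable_of_abs_le hf₂ hφ hφf),
    integral_eq_integral_sub_add_integral h₁ hf₁, integral_eq_integral_sub_add_integral h₂ hf₂]
  linarith [e₁.2, e₂.1]

section Bind

variable {Y : Type*} [MeasurableSpace Y] {ρ : Measure X} {P : Kernel X Y} {φ : Y → ℝ}

lemma integral_bind (hφ : Integrable φ (ρ.bind P)) :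
    ∫ y, φ y ∂(ρ.bind P) = ∫ x, ∫ y, φ y ∂(P x) ∂ρ := by
  rw [Measure.comp_eq_comp_const_apply] at hφ ⊢
  simpa using Kernel.integral_comp hφ

lemma _root_.MeasureTheory.Integrable.integral_bind (hφ : Integrable φ (ρ.bind P)) :
    Integrable (fun x => ∫ y, φ y ∂(P x)) ρ := by
  rw [Measure.comp_eq_comp_const_apply] at hφ
  simpa using hφ.integral_comp

end Bind

namespace Drift

variable {P : Kernel X X} {V : X → ℝ} {γ K : ℝ}

lemma integrable (hP : Drift P V γ K) (hV : Measurable V) (hV0 : ∀ x, 0 ≤ V x) (x : X) :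
    Integrable V (P x) :=
  ⟨hV.aestronglyMeasurable,
    (hasFiniteIntegral_iff_ofReal (ae_of_all _ hV0)).2 ((hP x).trans_lt ofReal_lt_top)⟩

lemma act_le (hP : Drift P V γ K) (hV : Measurable V) (hV0 : ∀ x, 0 ≤ V x) (hγ : 0 ≤ γ)
    (hK : 0 ≤ K) (x : X) : act P V x ≤ γ * V x + K := by
  have h := hP x
  rw [← ofReal_integral_eq_lintegral_ofReal (hP.integrable hV hV0 x) (ae_of_all _ hV0)] at h
  exact (ENNReal.ofReal_le_ofReal_iff (add_nonneg (mul_nonneg hγ (hV0 x)) hK)).1 h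

lemma integrable_bind (hP : Drift P V γ K) (hV : Measurable V) (hV0 : ∀ x, 0 ≤ V x)
    (hγ : 0 ≤ γ) (hK : 0 ≤ K) {ρ : Measure X} [IsFiniteMeasure ρ] (hρ : Integrable V ρ) :
    Integrable V (ρ.bind P) := by
  refine (Measure.integrable_comp_iff hV.aestronglyMeasurable).2
    ⟨ae_of_all _ (hP.integrable hV hV0), ?_⟩
  refine ((hρ.const_mul γ).add (integrable_const K)).mono'
    hV.norm.stronglyMeasurable.integral_kernel.aestronglyMeasurable (ae_of_all _ fun x => ?_)
  simp only [Real.norm_of_nonneg (hV0 _), Real.norm_of_nonneg (integral_nonneg hV0)]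
  exact hP.act_le hV hV0 hγ hK x

lemma act_one_add_mul_le [IsMarkovKernel P] (hP : Drift P V γ K) (hV : Measurable V)
    (hV0 : ∀ x, 0 ≤ V x) (hγ : 0 ≤ γ) (hK : 0 ≤ K) {β : ℝ} (hβ : 0 ≤ β) (x : X) :
    act P (fun z => 1 + β * V z) x ≤ 1 + β * (γ * V x + K) := by
  rw [act, integral_add (integrable_const 1) ((hP.integrable hV hV0 x).const_mul β),
    integral_const_mul]
  simp only [integral_const, probReal_univ, smul_eq_mul, mul_one]
  gcongr
  exact hP.act_le hV hV0 hγ hK x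

lemma act_sub_act_le [IsMarkovKernel P] (hP : Drift P V γ K) (hV : Measurable V)
    (hV0 : ∀ x, 0 ≤ V x) (hγ : 0 ≤ γ) (hK : 0 ≤ K) {β : ℝ} (hβ : 0 ≤ β) {φ : X → ℝ}
    (hφ : Measurable φ) (hφf : ∀ z, |φ z| ≤ 1 + β * V z) {ρ : Measure X} {x y : X}
    (hx : ρ ≤ P x) (hy : ρ ≤ P y) :
    act P φ x - act P φ y ≤ 2 + β * (γ * (V x + V y) + 2 * K) - 2 * ρ.real Set.univ := by
  have hf : ∀ w, Integrable (fun z => 1 + β * V z) (P w) := fun w =>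
    integrable_one_add_mul (hP.integrable hV hV0 w) β
  have : IsFiniteMeasure ρ := isFiniteMeasure_of_le _ hx
  have hρ : ρ.real Set.univ ≤ ∫ z, 1 + β * V z ∂ρ := by
    simpa using integral_mono (integrable_const 1) ((hf x).mono_measure hx)
      fun z => le_add_of_nonneg_right (mul_nonneg hβ (hV0 z))
  have h := integral_sub_integral_le_of_abs_le hx hy hφ hφf (hf x) (hf y)
  have hfx := hP.act_one_add_mul_le hV hV0 hγ hK hβ x
  have hfy := hP.act_one_add_mul_le hV hV0 hγ hK hβ y
  simp only [act] at h hfx hfy ⊢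
  linarith

lemma act_sub_act_le_mul [IsMarkovKernel P] (hP : Drift P V γ K) (hV : Measurable V)
    (hV0 : ∀ x, 0 ≤ V x) (hγ : 0 ≤ γ) (hK : 0 ≤ K) {R αbar : ℝ} (hαbar : 0 ≤ αbar)
    {μbar : Measure X} [IsProbabilityMeasure μbar]
    (hminor : ∀ x, V x ≤ R → ∀ A : Set X, MeasurableSet A →
      ENNReal.ofReal αbar * μbar A ≤ P x A)
    {α β : ℝ} (hβ : 0 ≤ β) (hαγ : γ ≤ α) (hα_small : 1 + β * K - αbar ≤ α)
    (hα_large : 2 + β * (γ * R + 2 * K) ≤ α * (2 + β * R))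
    {φ : X → ℝ} (hφ : Measurable φ) (hφf : ∀ z, |φ z| ≤ 1 + β * V z) (x y : X) :
    act P φ x - act P φ y ≤ α * (1 + β * V x) + α * (1 + β * V y) := by
  have hS : 0 ≤ V x + V y := add_nonneg (hV0 x) (hV0 y)
  by_cases hC : V x ≤ R ∧ V y ≤ R
  · have hle : ∀ w, V w ≤ R → ENNReal.ofReal αbar • μbar ≤ P w := fun w hw =>
      Measure.le_iff.2 fun A hA => by simpa using hminor w hw A hA
    have h := hP.act_sub_act_le hV hV0 hγ hK hβ hφ hφf (hle x hC.1) (hle y hC.2)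
    simp only [measureReal_ennreal_smul_apply, probReal_univ, mul_one,
      ENNReal.toReal_ofReal hαbar] at h
    nlinarith [mul_le_mul_of_nonneg_right hαγ (mul_nonneg hβ hS)]
  · have hR : R ≤ V x + V y := by
      rcases not_and_or.mp hC with h | h <;> linarith [not_le.mp h, hV0 x, hV0 y]
    have h := hP.act_sub_act_le hV hV0 hγ hK hβ hφ hφf (Measure.zero_le (P x))
      (Measure.zero_le (P y))
    simp only [measureReal_zero_apply, mul_zero, sub_zero] at h
    nlinarith [mul_le_mul_of_nonneg_right hαγ (mul_nonneg hβ (sub_nonneg.2 hR))]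

end Drift

lemma exists_contraction_constants {γ K R αbar : ℝ} (hγ : γ ∈ Set.Ioo 0 1) (hK : 0 < K)
    (hR : 2 * K / (1 - γ) < R) (hαbar : 0 < αbar) :
    ∃ α ∈ Set.Ioo (0 : ℝ) 1, ∃ β > (0 : ℝ), γ ≤ α ∧ 1 + β * K - αbar ≤ α ∧
      2 + β * (γ * R + 2 * K) ≤ α * (2 + β * R) := by
  obtain ⟨hγ0, hγ1⟩ := hγ
  have hKR : 2 * K < (1 - γ) * R := by rw [div_lt_iff₀ (by linarith)] at hR; linarith
  have hR0 : 0 < R := by nlinarith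
  have hβK : αbar / (2 * K) * K = αbar / 2 := by field_simp
  set β := αbar / (2 * K)
  have hβ : 0 < β := by positivity
  have hden : 0 < 2 + β * R := by positivity
  set c := (2 + β * (γ * R + 2 * K)) / (2 + β * R)
  refine ⟨max γ (max (1 - αbar / 2) c), ⟨hγ0.trans_le (le_max_left _ _), ?_⟩, β, hβ,
    le_max_left _ _, ?_, ?_⟩
  · refine max_lt hγ1 (max_lt (by linarith) ?_)
    rw [div_lt_one hden]
    nlinarith [mul_lt_mul_of_pos_left hKR hβ]
  · rw [hβK]
    linarith [le_max_of_le_right (b := γ) (le_max_left (1 - αbar / 2) c)]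
  · calc 2 + β * (γ * R + 2 * K) = c * (2 + β * R) := (div_mul_cancel₀ _ hden.ne').symm
      _ ≤ _ := mul_le_mul_of_nonneg_right (le_max_of_le_right (le_max_right _ _)) hden.le

theorem sigma_beta_contraction_general
    {X : Type*} [MeasurableSpace X] {k : ℕ} {Θ : Set (EuclideanSpace ℝ (Fin k))}
    (P : Θ → Kernel X X) [∀ θ, IsMarkovKernel (P θ)]
    (V : X → ℝ) (hVmeas : Measurable V) (hV0 : ∀ x, 0 ≤ V x)
    (γ K : ℝ) (hγ : γ ∈ Set.Ioo (0:ℝ) 1) (hK : 0 < K)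
    (hdrift : ∀ θ, Drift (P θ) V γ K)
    (R : ℝ) (hR : 2 * K / (1 - γ) < R)
    (μbar : Measure X) [IsProbabilityMeasure μbar]
    (αbar : ℝ) (hαbar : αbar ∈ Set.Ioo (0:ℝ) 1)
    (hminor : ∀ θ, ∀ x, V x ≤ R → ∀ A : Set X, MeasurableSet A →
      ENNReal.ofReal αbar * μbar A ≤ (P θ) x A) :
    ∃ α ∈ Set.Ioo (0:ℝ) 1, ∃ β > (0:ℝ), ∀ θ,
      ∀ (μ₁ μ₂ : Measure X) [IsProbabilityMeasure μ₁] [IsProbabilityMeasure μ₂],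
        Integrable V μ₁ → Integrable V μ₂ →
        sigmaB β V (μ₁.bind (P θ)) (μ₂.bind (P θ)) ≤ α * sigmaB β V μ₁ μ₂ := by
  obtain ⟨α, hα, β, hβ, hαγ, hα_small, hα_large⟩ :=
    exists_contraction_constants hγ hK hR hαbar.1
  refine ⟨α, hα, β, hβ, fun θ μ₁ μ₂ _ _ hV₁ hV₂ => ?_⟩
  have hf : Measurable fun z => 1 + β * V z := measurable_const.add (hVmeas.const_mul β)
  have hf0 : ∀ z, 0 ≤ 1 + β * V z := fun z => add_nonneg zero_le_one (mul_nonneg hβ.le (hV0 z))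
  have hfP : ∀ (μ : Measure X) [IsProbabilityMeasure μ], Integrable V μ →
      Integrable (fun z => 1 + β * V z) (μ.bind (P θ)) := fun μ _ hμ =>
    integrable_one_add_mul ((hdrift θ).integrable_bind hVmeas hV0 hγ.1.le hK.le hμ) β
  obtain ⟨φ, hφ, hφf, hσ⟩ :=
    exists_integral_tv_eq_integral_sub _ _ hf hf0 (hfP μ₁ hV₁) (hfP μ₂ hV₂)
  have hφP : ∀ (μ : Measure X) [IsProbabilityMeasure μ], Integrable V μ →
      Integrable φ (μ.bind (P θ)) := fun μ _ hμ => integrable_of_abs_le (hfP μ hμ) hφ hφf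
  rw [sigmaB, hσ, integral_bind (hφP μ₁ hV₁), integral_bind (hφP μ₂ hV₂), sigmaB,
    ← integral_const_mul]
  exact integral_sub_integral_le_integral_tv (by simp) (hφP μ₁ hV₁).integral_bind
    (hφP μ₂ hV₂).integral_bind ((integrable_one_add_mul hV₁ β).const_mul α)
    ((integrable_one_add_mul hV₂ β).const_mul α)
    ((hdrift θ).act_sub_act_le_mul hVmeas hV0 hγ.1.le hK.le hαbar.1.le (hminor θ) hβ.le hαγ
      hα_small hα_large hφ hφf)

/-- Contraction of the metric `σ_β` by the kernels, uniformly in the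
parameter. -/
theorem sigma_beta_contraction
    {X : Type*} [MeasurableSpace X] {k : ℕ} {Θ : Set (EuclideanSpace ℝ (Fin k))}
    (hΘ : Θ.Nonempty) (P : Θ → Kernel X X) [∀ θ, IsMarkovKernel (P θ)]
    (V : X → ℝ) (hVmeas : Measurable V) (hV0 : ∀ x, 0 ≤ V x)
    (γ K : ℝ) (hγ : γ ∈ Set.Ioo (0:ℝ) 1) (hK : 0 < K)
    (hdrift : ∀ θ, Drift (P θ) V γ K)
    (R : ℝ) (hR : 2 * K / (1 - γ) < R)
    (μbar : Measure X) [IsProbabilityMeasure μbar]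
    (αbar : ℝ) (hαbar : αbar ∈ Set.Ioo (0:ℝ) 1)
    (hminor : ∀ θ, ∀ x, V x ≤ R → ∀ A : Set X, MeasurableSet A →
      ENNReal.ofReal αbar * μbar A ≤ (P θ) x A) :
    ∃ α ∈ Set.Ioo (0:ℝ) 1, ∃ β > (0:ℝ), ∀ θ,
      ∀ (μ₁ μ₂ : Measure X) [IsProbabilityMeasure μ₁] [IsProbabilityMeasure μ₂],
        Integrable V μ₁ → Integrable V μ₂ →
        sigmaB β V (μ₁.bind (P θ)) (μ₂.bind (P θ)) ≤ α * sigmaB β V μ₁ μ₂ :=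
  sigma_beta_contraction_general P V hVmeas hV0 γ K hγ hK hdrift R hR μbar αbar hαbar hminor

end PoissonPaper
end
end

section
/- For all θ, θ' ∈ Θ, the invariant measures satisfy σ_β(μ*_θ, μ*_{θ'}) ≤ L_P (1/(1 − α)) (1 + βK/(1 − γ)) |θ − θ'|. -/
/-!
Invariance gives `μ_θ - μ_θ' = (P_θ - P_θ') μ_θ + P_θ' (μ_θ - μ_θ')`. The second term is
contracted by `α`; the first is controlled by integrating the kernel Lipschitz bound
`L_P |θ - θ'| (1 + βV)` against `μ_θ`, whose `V`-moment is at most `K / (1 - γ)` by the drift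
condition. Hence `σ ≤ L_P |θ - θ'| (1 + βK / (1 - γ)) + α σ`.

The only delicate point is the first term: `x ↦ |P_θ δ_x - P_θ' δ_x|` need not be measurable,
so it is compared with `|P_θ μ - P_θ' μ|` on the two halves of a Hahn decomposition of the latter.
-/

open MeasureTheory ProbabilityTheory ENNReal

noncomputable section

namespace PoissonPaper

variable {X : Type*} [MeasurableSpace X]

section TotalVariation

variable (μ₁ μ₂ μ₃ : Measure X) [IsFiniteMeasure μ₁] [IsFiniteMeasure μ₂] [IsFiniteMeasure μ₃]

instance : IsFiniteMeasure (tv μ₁ μ₂) := by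
  unfold tv
  infer_instance

lemma tv_eq_sub_add_sub_s10 : tv μ₁ μ₂ = (μ₁ - μ₂) + (μ₂ - μ₁) := by
  rw [tv, SignedMeasure.totalVariation, Measure.toJordanDecomposition_toSignedMeasure_sub]
  rfl

lemma tv_comm : tv μ₁ μ₂ = tv μ₂ μ₁ := by
  rw [tv_eq_sub_add_sub_s10, tv_eq_sub_add_sub_s10, add_comm]

lemma tv_eq_variation : tv μ₁ μ₂ = (μ₁.toSignedMeasure - μ₂.toSignedMeasure).variation :=
  SignedMeasure.totalVariation_eq_variation _

lemma tv_le_tv_add_tv : tv μ₁ μ₃ ≤ tv μ₁ μ₂ + tv μ₂ μ₃ := by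
  simp only [tv_eq_variation]
  rw [← sub_add_sub_cancel μ₁.toSignedMeasure μ₂.toSignedMeasure μ₃.toSignedMeasure]
  exact VectorMeasure.variation_add_le

lemma tv_le_add : tv μ₁ μ₂ ≤ μ₁ + μ₂ := by
  rw [tv_eq_variation]
  simpa only [Measure.variation_toSignedMeasure] using
    VectorMeasure.variation_sub_le (μ := μ₁.toSignedMeasure) (ν := μ₂.toSignedMeasure)

lemma le_add_tv : μ₁ ≤ μ₂ + tv μ₁ μ₂ :=
  calc μ₁ ≤ (μ₁ - μ₂) + μ₂ := Measure.sub_le_iff_le_add.1 le_rfl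
    _ ≤ μ₂ + tv μ₁ μ₂ := by
      rw [add_comm, tv_eq_sub_add_sub_s10]
      exact add_le_add_right (Measure.le_add_right le_rfl) _

lemma setLIntegral_le_add_tv (F : X → ℝ≥0∞) (j : Set X) :
    ∫⁻ x in j, F x ∂μ₁ ≤ ∫⁻ x in j, F x ∂μ₂ + ∫⁻ x in j, F x ∂(tv μ₁ μ₂) := by
  rw [← lintegral_add_measure, ← Measure.restrict_add]
  exact lintegral_mono' (Measure.restrict_mono subset_rfl (le_add_tv μ₁ μ₂)) le_rfl

end TotalVariation

section WeightedTotalVariation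

variable {F : X → ℝ≥0∞}

lemma lintegral_sub_le_of_isHahnDecomposition {ν₁ ν₂ : Measure X} [IsFiniteMeasure ν₂]
    {s : Set X} (hs : IsHahnDecomposition ν₂ ν₁ s) {r : ℝ≥0∞}
    (hfin : ∫⁻ x in s, F x ∂ν₂ ≠ ∞) (h : ∫⁻ x in s, F x ∂ν₁ ≤ ∫⁻ x in s, F x ∂ν₂ + r) :
    ∫⁻ x, F x ∂(ν₁ - ν₂) ≤ r := by
  have hnull : (ν₁ - ν₂).restrict sᶜ = 0 := by
    rw [Measure.restrict_sub_eq_restrict_sub_restrict hs.measurableSet.compl]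
    exact Measure.sub_eq_zero_of_le hs.ge_on_compl
  have hdiff : (ν₁ - ν₂).restrict s + ν₂.restrict s = ν₁.restrict s := by
    rw [Measure.restrict_sub_eq_restrict_sub_restrict hs.measurableSet]
    exact Measure.sub_add_cancel_of_le hs.le_on
  refine ENNReal.le_of_add_le_add_right hfin ?_
  calc ∫⁻ x, F x ∂(ν₁ - ν₂) + ∫⁻ x in s, F x ∂ν₂ = ∫⁻ x in s, F x ∂ν₁ := by
        rw [← lintegral_add_compl F hs.measurableSet, hnull, lintegral_zero_measure, add_zero,
          ← lintegral_add_measure, hdiff]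
    _ ≤ r + ∫⁻ x in s, F x ∂ν₂ := by rwa [add_comm r]

lemma lintegral_tv_le {ν₁ ν₂ : Measure X} [IsFiniteMeasure ν₁] [IsFiniteMeasure ν₂]
    (h₁ : ∫⁻ x, F x ∂ν₁ ≠ ∞) (h₂ : ∫⁻ x, F x ∂ν₂ ≠ ∞) {R : Set X → ℝ≥0∞} {C : ℝ≥0∞}
    (hR₁₂ : ∀ j, MeasurableSet j → ∫⁻ x in j, F x ∂ν₁ ≤ ∫⁻ x in j, F x ∂ν₂ + R j)
    (hR₂₁ : ∀ j, MeasurableSet j → ∫⁻ x in j, F x ∂ν₂ ≤ ∫⁻ x in j, F x ∂ν₁ + R j)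
    (hC : ∀ j, MeasurableSet j → R j + R jᶜ ≤ C) :
    ∫⁻ x, F x ∂(tv ν₁ ν₂) ≤ C := by
  obtain ⟨s, hs⟩ := exists_isHahnDecomposition ν₁ ν₂
  have hfin : ∀ {ν : Measure X} (j : Set X), ∫⁻ x, F x ∂ν ≠ ∞ → ∫⁻ x in j, F x ∂ν ≠ ∞ :=
    fun j h ↦ ne_top_of_le_ne_top h (setLIntegral_le_lintegral j F)
  calc ∫⁻ x, F x ∂(tv ν₁ ν₂) = ∫⁻ x, F x ∂(ν₁ - ν₂) + ∫⁻ x, F x ∂(ν₂ - ν₁) := by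
        rw [tv_eq_sub_add_sub_s10, lintegral_add_measure]
    _ ≤ R sᶜ + R s := add_le_add
        (lintegral_sub_le_of_isHahnDecomposition hs.compl (hfin _ h₂)
          (hR₁₂ _ hs.measurableSet.compl))
        (lintegral_sub_le_of_isHahnDecomposition hs (hfin _ h₁) (hR₂₁ _ hs.measurableSet))
    _ ≤ C := by rw [add_comm]; exact hC s hs.measurableSet

variable (μ : Measure X) (κ η : Kernel X X)

lemma setLIntegral_bind (hF : Measurable F) {j : Set X} (hj : MeasurableSet j) :
    ∫⁻ y in j, F y ∂(μ.bind κ) = ∫⁻ x, ∫⁻ y in j, F y ∂(κ x) ∂μ := by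
  rw [← lintegral_indicator hj,
    Measure.lintegral_bind κ.measurable.aemeasurable (hF.indicator hj).aemeasurable]
  simp_rw [lintegral_indicator hj]

variable [IsMarkovKernel κ] [IsMarkovKernel η]

lemma setLIntegral_bind_le_add (hF : Measurable F) {j : Set X} (hj : MeasurableSet j) :
    ∫⁻ y in j, F y ∂(μ.bind κ) ≤
      ∫⁻ y in j, F y ∂(μ.bind η) + ∫⁻ x, ∫⁻ y in j, F y ∂(tv (κ x) (η x)) ∂μ := by
  rw [setLIntegral_bind μ κ hF hj, setLIntegral_bind μ η hF hj,
    ← lintegral_add_left (hF.setLIntegral_kernel hj)]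
  exact lintegral_mono fun x ↦ setLIntegral_le_add_tv (κ x) (η x) F j

lemma lintegral_tv_bind_le [IsFiniteMeasure μ] (hF : Measurable F)
    (hκ : ∫⁻ y, F y ∂(μ.bind κ) ≠ ∞) (hη : ∫⁻ y, F y ∂(μ.bind η) ≠ ∞) :
    ∫⁻ y, F y ∂(tv (μ.bind κ) (μ.bind η)) ≤ ∫⁻ x, ∫⁻ y, F y ∂(tv (κ x) (η x)) ∂μ := by
  refine lintegral_tv_le hκ hη (fun j hj ↦ setLIntegral_bind_le_add μ κ η hF hj)
    (fun j hj ↦ by simpa only [tv_comm] using setLIntegral_bind_le_add μ η κ hF hj)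
    fun j hj ↦ (le_lintegral_add _ _).trans_eq ?_
  simp_rw [lintegral_add_compl _ hj]

end WeightedTotalVariation

lemma one_add_mul_nonneg {Y : Type*} {β : ℝ} {V : Y → ℝ} (hβ : 0 ≤ β) (hV0 : ∀ y, 0 ≤ V y)
    (y : Y) : 0 ≤ 1 + β * V y := by
  have := hV0 y
  positivity

section Sigma

variable {β : ℝ} {V : X → ℝ} {μ₁ μ₂ μ₃ : Measure X}
  [IsFiniteMeasure μ₁] [IsFiniteMeasure μ₂] [IsFiniteMeasure μ₃]

lemma integrable_one_add_mul_s10 (hV : Integrable V μ₁) (β : ℝ) :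
    Integrable (fun x ↦ 1 + β * V x) μ₁ :=
  (integrable_const 1).add (hV.const_mul β)

lemma integral_one_add_mul [IsProbabilityMeasure μ₁] (hV : Integrable V μ₁) (β : ℝ) :
    ∫ x, (1 + β * V x) ∂μ₁ = 1 + β * ∫ x, V x ∂μ₁ := by
  rw [integral_add (integrable_const 1) (hV.const_mul β), integral_const_mul]
  simp

lemma integrable_tv {f : X → ℝ} (h₁ : Integrable f μ₁) (h₂ : Integrable f μ₂) :
    Integrable f (tv μ₁ μ₂) :=
  (h₁.add_measure h₂).mono_measure (tv_le_add μ₁ μ₂)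

lemma sigmaB_congr {ν₁ ν₂ : Measure X} [IsFiniteMeasure ν₁] [IsFiniteMeasure ν₂]
    (h₁ : μ₁ = ν₁) (h₂ : μ₂ = ν₂) : sigmaB β V μ₁ μ₂ = sigmaB β V ν₁ ν₂ := by
  subst h₁ h₂
  rfl

variable (hβ : 0 ≤ β) (hV0 : ∀ x, 0 ≤ V x)
include hβ hV0

lemma sigmaB_nonneg : 0 ≤ sigmaB β V μ₁ μ₂ :=
  integral_nonneg (one_add_mul_nonneg hβ hV0)

lemma ofReal_sigmaB (h₁ : Integrable V μ₁) (h₂ : Integrable V μ₂) :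
    ENNReal.ofReal (sigmaB β V μ₁ μ₂) = ∫⁻ x, ENNReal.ofReal (1 + β * V x) ∂(tv μ₁ μ₂) :=
  ofReal_integral_eq_lintegral_ofReal
    (integrable_tv (integrable_one_add_mul_s10 h₁ β) (integrable_one_add_mul_s10 h₂ β))
    (ae_of_all _ (one_add_mul_nonneg hβ hV0))

lemma sigmaB_le_add (h₁ : Integrable V μ₁) (h₂ : Integrable V μ₂) (h₃ : Integrable V μ₃) :
    sigmaB β V μ₁ μ₃ ≤ sigmaB β V μ₁ μ₂ + sigmaB β V μ₂ μ₃ := by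
  have h₁₂ := integrable_tv (integrable_one_add_mul_s10 h₁ β) (integrable_one_add_mul_s10 h₂ β)
  have h₂₃ := integrable_tv (integrable_one_add_mul_s10 h₂ β) (integrable_one_add_mul_s10 h₃ β)
  rw [sigmaB, sigmaB, sigmaB, ← integral_add_measure h₁₂ h₂₃]
  exact integral_mono_measure (tv_le_tv_add_tv μ₁ μ₂ μ₃)
    (ae_of_all _ (one_add_mul_nonneg hβ hV0)) (h₁₂.add_measure h₂₃)

lemma sigmaB_bind_le (hVmeas : Measurable V) (μ : Measure X) [IsFiniteMeasure μ]
    (κ η : Kernel X X) [IsMarkovKernel κ] [IsMarkovKernel η]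
    (hκ : ∀ x, Integrable V (κ x)) (hη : ∀ x, Integrable V (η x))
    (hμκ : Integrable V (μ.bind κ)) (hμη : Integrable V (μ.bind η))
    {g : X → ℝ} (hg : Integrable g μ) (h : ∀ x, sigmaB β V (κ x) (η x) ≤ g x) :
    sigmaB β V (μ.bind κ) (μ.bind η) ≤ ∫ x, g x ∂μ := by
  have hg0 : ∀ x, 0 ≤ g x := fun x ↦ (sigmaB_nonneg hβ hV0).trans (h x)
  rw [← ENNReal.ofReal_le_ofReal_iff (integral_nonneg hg0), ofReal_sigmaB hβ hV0 hμκ hμη,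
    ofReal_integral_eq_lintegral_ofReal hg (ae_of_all _ hg0)]
  calc ∫⁻ y, ENNReal.ofReal (1 + β * V y) ∂(tv (μ.bind κ) (μ.bind η))
      ≤ ∫⁻ x, ∫⁻ y, ENNReal.ofReal (1 + β * V y) ∂(tv (κ x) (η x)) ∂μ :=
        lintegral_tv_bind_le μ κ η (measurable_const.add (hVmeas.const_mul β)).ennreal_ofReal
          (integrable_one_add_mul_s10 hμκ β).lintegral_lt_top.ne
          (integrable_one_add_mul_s10 hμη β).lintegral_lt_top.ne
    _ ≤ ∫⁻ x, ENNReal.ofReal (g x) ∂μ := lintegral_mono fun x ↦ by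
        rw [← ofReal_sigmaB hβ hV0 (hκ x) (hη x)]
        exact ENNReal.ofReal_le_ofReal (h x)

end Sigma

namespace Drift

variable {κ : Kernel X X} {V : X → ℝ} {γ K : ℝ} (hκ : Drift κ V γ K)
  (hVmeas : Measurable V) (hV0 : ∀ x, 0 ≤ V x)
include hκ hVmeas

lemma lintegral_bind_le (μ : Measure X) :
    ∫⁻ y, ENNReal.ofReal (V y) ∂(μ.bind κ) ≤ ∫⁻ x, ENNReal.ofReal (γ * V x + K) ∂μ := by
  rw [Measure.lintegral_bind κ.measurable.aemeasurable hVmeas.ennreal_ofReal.aemeasurable]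
  exact lintegral_mono hκ

include hV0

lemma integrable_s10 (x : X) : Integrable V (κ x) :=
  ⟨hVmeas.aestronglyMeasurable,
    (hasFiniteIntegral_iff_ofReal (ae_of_all _ hV0)).2 ((hκ x).trans_lt ofReal_lt_top)⟩

lemma integrable_bind_s10 (μ : Measure X) [IsFiniteMeasure μ] (hμ : Integrable V μ) :
    Integrable V (μ.bind κ) :=
  ⟨hVmeas.aestronglyMeasurable, (hasFiniteIntegral_iff_ofReal (ae_of_all _ hV0)).2
    ((hκ.lintegral_bind_le hVmeas μ).trans_lt
      ((hμ.const_mul γ).add (integrable_const K)).lintegral_lt_top)⟩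

lemma integral_bind_le (hγ : 0 ≤ γ) (hK : 0 ≤ K) (μ : Measure X) [IsProbabilityMeasure μ]
    (hμ : Integrable V μ) : ∫ y, V y ∂(μ.bind κ) ≤ γ * ∫ x, V x ∂μ + K := by
  have hlin : Integrable (fun x ↦ γ * V x + K) μ := (hμ.const_mul γ).add (integrable_const K)
  have hlin0 : ∀ x, 0 ≤ γ * V x + K := fun x ↦ by have := hV0 x; positivity
  have hint0 : 0 ≤ ∫ x, V x ∂μ := integral_nonneg hV0
  rw [← ENNReal.ofReal_le_ofReal_iff (by positivity),
    ofReal_integral_eq_lintegral_ofReal (hκ.integrable_bind_s10 hVmeas hV0 μ hμ) (ae_of_all _ hV0)]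
  calc ∫⁻ y, ENNReal.ofReal (V y) ∂(μ.bind κ) ≤ ∫⁻ x, ENNReal.ofReal (γ * V x + K) ∂μ :=
        hκ.lintegral_bind_le hVmeas μ
    _ = ENNReal.ofReal (γ * ∫ x, V x ∂μ + K) := by
        rw [← ofReal_integral_eq_lintegral_ofReal hlin (ae_of_all _ hlin0),
          integral_add (hμ.const_mul γ) (integrable_const K), integral_const_mul]
        simp

lemma integral_le_of_bind_eq (hγ : γ ∈ Set.Ioo 0 1) (hK : 0 ≤ K) (μ : Measure X)
    [IsProbabilityMeasure μ] (hμ : Integrable V μ) (hinv : μ.bind κ = μ) :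
    ∫ x, V x ∂μ ≤ K / (1 - γ) := by
  have hstep := hκ.integral_bind_le hVmeas hV0 hγ.1.le hK μ hμ
  rw [hinv] at hstep
  rw [le_div_iff₀ (by linarith [hγ.2])]
  linarith

end Drift

theorem invariant_measures_lipschitz_general
    {X : Type*} [MeasurableSpace X] {k : ℕ} {Θ : Set (EuclideanSpace ℝ (Fin k))}
    (P : Θ → Kernel X X) [∀ θ, IsMarkovKernel (P θ)]
    (V : X → ℝ) (hVmeas : Measurable V) (hV0 : ∀ x, 0 ≤ V x)
    (β : ℝ) (hβ : 0 < β)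
    (γ K : ℝ) (hγ : γ ∈ Set.Ioo (0:ℝ) 1) (hK : 0 ≤ K) (hdrift : ∀ θ, Drift (P θ) V γ K)
    (L_P : ℝ)
    (hlip : ∀ θ θ' : Θ, ∀ x,
      sigmaB β V ((P θ) x) ((P θ') x) ≤ L_P * ‖θ.1 - θ'.1‖ * (1 + β * V x))
    (α : ℝ) (hα : α ∈ Set.Ioo γ 1)
    (hsig : ∀ θ, ∀ (μ₁ μ₂ : Measure X) [IsProbabilityMeasure μ₁] [IsProbabilityMeasure μ₂],
      Integrable V μ₁ → Integrable V μ₂ →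
      sigmaB β V (μ₁.bind (P θ)) (μ₂.bind (P θ)) ≤ α * sigmaB β V μ₁ μ₂)
    (μst : Θ → Measure X) [∀ θ, IsProbabilityMeasure (μst θ)]
    (hμint : ∀ θ, Integrable V (μst θ)) (hμinv : ∀ θ, (μst θ).bind (P θ) = μst θ) :
    ∀ θ θ' : Θ, sigmaB β V (μst θ) (μst θ') ≤
      L_P * (1 / (1 - α)) * (1 + β * (K / (1 - γ))) * ‖θ.1 - θ'.1‖ := by
  intro θ θ'
  set c := L_P * ‖θ.1 - θ'.1‖
  have hbind : ∀ θ₁ θ₂, Integrable V ((μst θ₁).bind (P θ₂)) := fun θ₁ θ₂ ↦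
    (hdrift θ₂).integrable_bind_s10 hVmeas hV0 _ (hμint θ₁)
  have hc : 0 ≤ c := by
    obtain ⟨x₀⟩ := nonempty_of_isProbabilityMeasure (μst θ)
    exact nonneg_of_mul_nonneg_left ((sigmaB_nonneg hβ.le hV0).trans (hlip θ θ' x₀))
      (by have := hV0 x₀; positivity)
  have hkernel :
      sigmaB β V ((μst θ).bind (P θ)) ((μst θ).bind (P θ')) ≤ c * (1 + β * (K / (1 - γ))) :=
    calc _ ≤ ∫ x, c * (1 + β * V x) ∂(μst θ) :=
          sigmaB_bind_le hβ.le hV0 hVmeas _ _ _ ((hdrift θ).integrable_s10 hVmeas hV0)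
            ((hdrift θ').integrable_s10 hVmeas hV0) (hbind θ θ) (hbind θ θ')
            ((integrable_one_add_mul_s10 (hμint θ) β).const_mul c) (hlip θ θ')
      _ = c * (1 + β * ∫ x, V x ∂(μst θ)) := by
          rw [integral_const_mul, integral_one_add_mul (hμint θ)]
      _ ≤ c * (1 + β * (K / (1 - γ))) := by
          gcongr
          exact (hdrift θ).integral_le_of_bind_eq hVmeas hV0 hγ hK _ (hμint θ) (hμinv θ)
  have hcontract := hsig θ' (μst θ) (μst θ') (hμint θ) (hμint θ')
  have htriangle := sigmaB_le_add hβ.le hV0 (hbind θ θ) (hbind θ θ') (hbind θ' θ')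
  rw [sigmaB_congr (hμinv θ) (hμinv θ')] at htriangle
  have h1α : 0 < 1 - α := by linarith [hα.2]
  rw [show L_P * (1 / (1 - α)) * (1 + β * (K / (1 - γ))) * ‖θ.1 - θ'.1‖ =
      c * (1 + β * (K / (1 - γ))) / (1 - α) by ring, le_div_iff₀ h1α]
  linarith

/-- Lipschitz continuity in the parameter of the invariant measures. -/
theorem invariant_measures_lipschitz
    {X : Type*} [MeasurableSpace X] {k : ℕ} {Θ : Set (EuclideanSpace ℝ (Fin k))}
    (hΘ : Θ.Nonempty) (P : Θ → Kernel X X) [∀ θ, IsMarkovKernel (P θ)]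
    (V : X → ℝ) (hVmeas : Measurable V) (hV0 : ∀ x, 0 ≤ V x)
    (β : ℝ) (hβ : 0 < β)
    (γ K : ℝ) (hγ : γ ∈ Set.Ioo (0:ℝ) 1) (hK : 0 ≤ K) (hdrift : ∀ θ, Drift (P θ) V γ K)
    (L_P : ℝ)
    (hlip : ∀ θ θ' : Θ, ∀ x,
      sigmaB β V ((P θ) x) ((P θ') x) ≤ L_P * ‖θ.1 - θ'.1‖ * (1 + β * V x))
    (α : ℝ) (hα : α ∈ Set.Ioo γ 1)
    (hsig : ∀ θ, ∀ (μ₁ μ₂ : Measure X) [IsProbabilityMeasure μ₁] [IsProbabilityMeasure μ₂],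
      Integrable V μ₁ → Integrable V μ₂ →
      sigmaB β V (μ₁.bind (P θ)) (μ₂.bind (P θ)) ≤ α * sigmaB β V μ₁ μ₂)
    (μst : Θ → Measure X) [∀ θ, IsProbabilityMeasure (μst θ)]
    (hμint : ∀ θ, Integrable V (μst θ)) (hμinv : ∀ θ, (μst θ).bind (P θ) = μst θ) :
    ∀ θ θ' : Θ, sigmaB β V (μst θ) (μst θ') ≤
      L_P * (1 / (1 - α)) * (1 + β * (K / (1 - γ))) * ‖θ.1 - θ'.1‖ :=
  invariant_measures_lipschitz_general P V hVmeas hV0 β hβ γ K hγ hK hdrift L_P hlip α hα hsig μst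
    hμint hμinv

end PoissonPaper
end
end
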